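/- arXiv:1809.09579 — 3 statements merged into one kernel-verified Lean document; each statement's English description precedes it below -/
import Mathlib

section
/- Let M ≥ 1 and x ≥ 2 be integers, let a be coprime to M, and let U ≥ 1. Suppose that for every prime p ≤ x with p ∤ M a residue class a_p (mod p) is given such that every integer n ∈ [1, U] satisfies n ≡ a_p (mod p) for some such prime p. Let r be an integer with M·r ≡ −1 (mod P_M(x)). Then there exists an integer U₀ with x/M ≤ U₀ ≤ x/M + P_M(x) such that for every integer j with 1 ≤ j ≤ U, the number M·(U₀ + a·r + j) + a is divisible by some prime p ≤ x with p ∤ M. In particular, every such number that exceeds x is composite, so the arithmetic progression a (mod M) contains U consecutive terms, all exceeding x, that are all composite. -/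
/-!
Sieve the block `[1, U]` by the classes `a_p (mod p)` and use the Chinese remainder theorem to find
`k` with `k ≡ a_p (mod p)` for every prime `p ≤ x`, `p ∤ M`. Any `U₀ ≡ -k (mod P_M(x))` then has
`U₀ + j ≡ 0 (mod p)` whenever `j ≡ a_p (mod p)`, and since `M r ≡ -1 (mod p)`,
`M (U₀ + a r + j) + a ≡ M (U₀ + j) ≡ 0 (mod p)`. A complete residue system modulo `P_M(x)`
fits in `[x/M, x/M + P_M(x)]`, which fixes the size of `U₀`.
-/

open scoped Classical

/-- `P_M(t) = ∏_{p ≤ t, p ∤ M} p`, the product of the primes up to `t` not dividing `M`. -/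
noncomputable def PM (M : ℕ) (t : ℝ) : ℕ :=
  ∏ p ∈ (Finset.range (⌊t⌋₊ + 1)).filter (fun p => p.Prime ∧ ¬ p ∣ M), p

theorem Nat.exists_modEq_forall_mem_of_prime (S : Finset ℕ) (hS : ∀ p ∈ S, p.Prime)
    (b : ℕ → ℕ) : ∃ k : ℕ, ∀ p ∈ S, k ≡ b p [MOD p] := by
  refine ⟨Nat.chineseRemainderOfFinset b id S (fun p hp => (hS p hp).ne_zero) ?_,
    (Nat.chineseRemainderOfFinset b id S _ _).2⟩
  intro p hp q hq hpq
  exact (Nat.coprime_primes (hS p hp) (hS q hq)).2 hpq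

theorem Int.exists_modEq_mem_Icc (v : ℤ) {P : ℕ} (hP : 0 < P) (y : ℝ) :
    ∃ u : ℤ, u ≡ v [ZMOD P] ∧ y ≤ u ∧ (u : ℝ) ≤ y + P := by
  set c := ⌈y⌉
  have hrem_nonneg : 0 ≤ (v - c) % P := Int.emod_nonneg _ (by omega)
  have hrem_lt : (v - c) % P < P := Int.emod_lt_of_pos _ (by omega)
  refine ⟨c + (v - c) % P, ?_, ?_, ?_⟩
  · calc c + (v - c) % P ≡ c + (v - c) [ZMOD P] := (Int.mod_modEq _ _).add_left c
      _ = v := by ring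
  · have : (0 : ℝ) ≤ ((v - c) % P : ℤ) := by exact_mod_cast hrem_nonneg
    push_cast
    linarith [Int.le_ceil y]
  · have : (((v - c) % P : ℤ) : ℝ) ≤ P - 1 := by
      have : (v - c) % P ≤ P - 1 := by omega
      exact_mod_cast this
    push_cast
    linarith [Int.ceil_lt_add_one y]

theorem PM_pos (M : ℕ) (t : ℝ) : 0 < PM M t :=
  Finset.prod_pos fun _ hp => (Finset.mem_filter.1 hp).2.1.pos

theorem mem_primes_of_le {M x p : ℕ} (hp : p.Prime) (hpx : p ≤ x) (hpM : ¬ p ∣ M) :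
    p ∈ (Finset.range (⌊(x : ℝ)⌋₊ + 1)).filter (fun p => p.Prime ∧ ¬ p ∣ M) := by
  simp only [Finset.mem_filter, Finset.mem_range, Nat.floor_natCast]
  exact ⟨by omega, hp, hpM⟩

theorem dvd_mul_add_of_modEq {p M a r U₀ j k : ℤ} (hU₀ : U₀ ≡ -k [ZMOD p])
    (hj : j ≡ k [ZMOD p]) (hr : M * r ≡ -1 [ZMOD p]) : p ∣ M * (U₀ + a * r + j) + a := by
  rw [← Int.modEq_zero_iff_dvd]
  calc M * (U₀ + a * r + j) + a ≡ M * (-k + a * r + k) + a [ZMOD p] := by gcongr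
    _ = a * (M * r) + a := by ring
    _ ≡ a * -1 + a [ZMOD p] := by gcongr
    _ = 0 := by ring

theorem stmt2_general (M x : ℕ) (a : ℕ) (U : ℕ) (ap : ℕ → ℕ)
    (hsieve : ∀ n : ℕ, 1 ≤ n → n ≤ U →
      ∃ p : ℕ, p.Prime ∧ p ≤ x ∧ ¬ p ∣ M ∧ n % p = ap p % p)
    (r : ℤ) (hr : (M : ℤ) * r ≡ -1 [ZMOD (PM M (x : ℝ) : ℤ)]) :
    ∃ U₀ : ℤ, (x : ℝ) / (M : ℝ) ≤ (U₀ : ℝ) ∧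
      (U₀ : ℝ) ≤ (x : ℝ) / (M : ℝ) + (PM M (x : ℝ) : ℝ) ∧
      ∀ j : ℕ, 1 ≤ j → j ≤ U →
        ∃ p : ℕ, p.Prime ∧ p ≤ x ∧ ¬ p ∣ M ∧
          (p : ℤ) ∣ (M : ℤ) * (U₀ + (a : ℤ) * r + (j : ℤ)) + (a : ℤ) := by
  obtain ⟨k, hk⟩ := Nat.exists_modEq_forall_mem_of_prime
    ((Finset.range (⌊(x : ℝ)⌋₊ + 1)).filter (fun p => p.Prime ∧ ¬ p ∣ M))
    (fun p hp => (Finset.mem_filter.1 hp).2.1) ap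
  obtain ⟨U₀, hU₀, hlow, hupp⟩ := Int.exists_modEq_mem_Icc (-(k : ℤ)) (PM_pos M x) (x / M)
  refine ⟨U₀, hlow, hupp, fun j hj1 hjU => ?_⟩
  obtain ⟨p, hp, hpx, hpM, hjp⟩ := hsieve j hj1 hjU
  have hpS := mem_primes_of_le hp hpx hpM
  have hpP : (p : ℤ) ∣ PM M x := Int.natCast_dvd_natCast.2 (Finset.dvd_prod_of_mem _ hpS)
  have hjk : (j : ℤ) ≡ k [ZMOD p] := Int.natCast_modEq_iff.2 (hjp.trans (hk p hpS).symm)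
  exact ⟨p, hp, hpx, hpM, dvd_mul_add_of_modEq (hU₀.of_dvd hpP) hjk (hr.of_dvd hpP)⟩

/-- If the primes `p ≤ x`, `p ∤ M` sieve out `[1, U]` via residue classes
`a_p (mod p)`, and `M·r ≡ −1 (mod P_M(x))`, then there is an integer `U₀` with
`x/M ≤ U₀ ≤ x/M + P_M(x)` such that for every `1 ≤ j ≤ U` the number
`M·(U₀ + a·r + j) + a` is divisible by some prime `p ≤ x` with `p ∤ M`. -/
theorem stmt2 (M x : ℕ) (hM : 1 ≤ M) (hx : 2 ≤ x) (a : ℕ) (ha : Nat.Coprime a M)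
    (U : ℕ) (hU : 1 ≤ U) (ap : ℕ → ℕ)
    (hsieve : ∀ n : ℕ, 1 ≤ n → n ≤ U →
      ∃ p : ℕ, p.Prime ∧ p ≤ x ∧ ¬ p ∣ M ∧ n % p = ap p % p)
    (r : ℤ) (hr : (M : ℤ) * r ≡ -1 [ZMOD (PM M (x : ℝ) : ℤ)]) :
    ∃ U₀ : ℤ, (x : ℝ) / (M : ℝ) ≤ (U₀ : ℝ) ∧
      (U₀ : ℝ) ≤ (x : ℝ) / (M : ℝ) + (PM M (x : ℝ) : ℝ) ∧
      ∀ j : ℕ, 1 ≤ j → j ≤ U →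
        ∃ p : ℕ, p.Prime ∧ p ≤ x ∧ ¬ p ∣ M ∧
          (p : ℤ) ∣ (M : ℤ) * (U₀ + (a : ℤ) * r + (j : ℤ)) + (a : ℤ) :=
  stmt2_general M x a U ap hsieve r hr
end

section
/- Let Q be a finite set of primes, R a finite set of integers, and for each q ∈ Q let μ_q : ℤ/qℤ → [0,1] be a probability mass function (so ∑_{a mod q} μ_q(a) = 1). Let L ≥ 0 and suppose that ∑_{q ∈ Q} μ_q(p₀ mod q) ≥ L for every p₀ ∈ R. Then there exists a choice of residues a_q ∈ ℤ/qℤ, one for each q ∈ Q, such that #{p₀ ∈ R : p₀ ≢ a_q (mod q) for every q ∈ Q} ≤ e^{−L}·|R|. -/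
/-!
Method of conditional expectations. If the residues `a_q` are drawn independently from the `μ_q`,
an element `p` of `R` avoids all chosen classes with probability
`∏_q (1 - μ_q(p mod q)) ≤ exp(-∑_q μ_q(p mod q))`. The residues are fixed one modulus at a time:
the expected weight of the survivors is a `μ_q`-average over the choices of `a_q`, so some choice
does no worse than that average.
-/

open Finset

lemma Real.prod_one_sub_le_exp_neg_sum {ι : Type*} (s : Finset ι) {x : ι → ℝ}
    (hx : ∀ i ∈ s, x i ≤ 1) : ∏ i ∈ s, (1 - x i) ≤ Real.exp (-∑ i ∈ s, x i) := by
  rw [← sum_neg_distrib, Real.exp_sum]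
  exact prod_le_prod (fun i hi => sub_nonneg.2 (hx i hi)) fun i _ => Real.one_sub_le_exp_neg _

lemma pos_of_sum_range_eq_one {q : ℕ} {μ : ℕ → ℝ} (hμ : ∑ j ∈ range q, μ j = 1) : 0 < q :=
  Nat.pos_of_ne_zero (by rintro rfl; simp at hμ)

lemma sum_mul_sum_filter_mod_ne {q : ℕ} {μ : ℕ → ℝ} (hμ : ∑ j ∈ range q, μ j = 1)
    (R : Finset ℕ) (f : ℕ → ℝ) :
    ∑ j ∈ range q, μ j * ∑ p ∈ R with p % q ≠ j, f p
      = ∑ p ∈ R, (1 - μ (p % q)) * f p := by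
  have hmod : ∀ p, p % q ∈ range q :=
    fun p => mem_range.2 (Nat.mod_lt p (pos_of_sum_range_eq_one hμ))
  simp_rw [sum_filter, mul_sum]
  rw [sum_comm]
  refine sum_congr rfl fun p _ => ?_
  simp_rw [mul_ite, mul_zero]
  rw [← sum_filter, ← sum_mul, filter_ne, sum_erase_eq_sub (hmod p), hμ]

lemma exists_sum_filter_mod_ne_le {q : ℕ} {μ : ℕ → ℝ} (hμ0 : ∀ j, 0 ≤ μ j)
    (hμ : ∑ j ∈ range q, μ j = 1) (R : Finset ℕ) (f : ℕ → ℝ) :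
    ∃ j < q, ∑ p ∈ R with p % q ≠ j, f p ≤ ∑ p ∈ R, (1 - μ (p % q)) * f p := by
  have hne : (range q).Nonempty := nonempty_range_iff.2 (pos_of_sum_range_eq_one hμ).ne'
  obtain ⟨j, hj, hmin⟩ := (range q).exists_mem_eq_inf' hne fun j => ∑ p ∈ R with p % q ≠ j, f p
  refine ⟨j, mem_range.1 hj, ?_⟩
  -- the minimum over `j` is at most the `μ`-weighted mean, which is the right-hand side
  rw [← hmin, ← sum_mul_sum_filter_mod_ne hμ]
  simp_rw [← smul_eq_mul, ← centerMass_eq_of_sum_1 _ _ hμ]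
  exact inf_le_centerMass (fun j _ => hμ0 j) (hμ ▸ one_pos)

lemma exists_card_uncovered_le_sum_prod (Q : Finset ℕ) (μ : ℕ → ℕ → ℝ)
    (hμ0 : ∀ q ∈ Q, ∀ a, 0 ≤ μ q a) (hμ : ∀ q ∈ Q, ∑ a ∈ range q, μ q a = 1) (R : Finset ℕ) :
    ∃ a : ℕ → ℕ, (#{p ∈ R | ∀ q ∈ Q, p % q ≠ a q % q} : ℝ)
      ≤ ∑ p ∈ R, ∏ q ∈ Q, (1 - μ q (p % q)) := by
  induction Q using Finset.induction_on generalizing R with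
  | empty => exact ⟨0, by simp⟩
  | @insert q Q hqQ ih =>
    rw [forall_mem_insert] at hμ0 hμ
    obtain ⟨j, hjq, hj⟩ := exists_sum_filter_mod_ne_le hμ0.1 hμ.1 R
      fun p => ∏ r ∈ Q, (1 - μ r (p % r))
    obtain ⟨a, ha⟩ := ih hμ0.2 hμ.2 {p ∈ R | p % q ≠ j}
    refine ⟨Function.update a q j, ?_⟩
    have hfilter : {p ∈ R | ∀ r ∈ insert q Q, p % r ≠ Function.update a q j r % r}
        = {p ∈ {p ∈ R | p % q ≠ j} | ∀ r ∈ Q, p % r ≠ a r % r} := by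
      rw [filter_filter]
      refine filter_congr fun p _ => ?_
      simp only [forall_mem_insert, Function.update_self, Nat.mod_eq_of_lt hjq]
      grind [Function.update_of_ne]
    calc _ = (#{p ∈ {p ∈ R | p % q ≠ j} | ∀ r ∈ Q, p % r ≠ a r % r} : ℝ) := by rw [hfilter]
      _ ≤ _ := ha.trans hj
      _ = _ := by simp only [prod_insert hqQ]

theorem stmt15_general (Q : Finset ℕ) (R : Finset ℕ)
    (μ : ℕ → ℕ → ℝ)
    (hμ01 : ∀ q ∈ Q, ∀ a : ℕ, 0 ≤ μ q a ∧ μ q a ≤ 1)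
    (hμsum : ∀ q ∈ Q, ∑ a ∈ Finset.range q, μ q a = 1)
    (L : ℝ)
    (hlower : ∀ p₀ ∈ R, L ≤ ∑ q ∈ Q, μ q (p₀ % q)) :
    ∃ a : ℕ → ℕ,
      ((R.filter (fun p₀ : ℕ => ∀ q ∈ Q, p₀ % q ≠ a q % q)).card : ℝ)
        ≤ Real.exp (-L) * (R.card : ℝ) := by
  obtain ⟨a, ha⟩ := exists_card_uncovered_le_sum_prod Q μ
    (fun q hq a => (hμ01 q hq a).1) hμsum R
  refine ⟨a, ha.trans ?_⟩
  calc ∑ p ∈ R, ∏ q ∈ Q, (1 - μ q (p % q))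
      ≤ ∑ p ∈ R, Real.exp (-∑ q ∈ Q, μ q (p % q)) := sum_le_sum fun p _ =>
        Real.prod_one_sub_le_exp_neg_sum Q fun q hq => (hμ01 q hq _).2
    _ ≤ ∑ _p ∈ R, Real.exp (-L) := sum_le_sum fun p hp =>
        Real.exp_le_exp.2 (neg_le_neg (hlower p hp))
    _ = Real.exp (-L) * #R := by rw [sum_const, nsmul_eq_mul, mul_comm]

/-- (Probabilistic covering principle.) Let `Q` be a finite set of
primes, `R` a finite set of integers, and for each `q ∈ Q` let `μ_q` be a probability
mass function on the residues mod `q`. If `∑_{q ∈ Q} μ_q(p₀ mod q) ≥ L` for every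
`p₀ ∈ R`, then there is a choice of residues `a_q`, one for each `q ∈ Q`, such that at
most `e^{−L}·|R|` elements of `R` avoid all the chosen classes. -/
theorem stmt15 (Q : Finset ℕ) (hQ : ∀ q ∈ Q, q.Prime) (R : Finset ℕ)
    (μ : ℕ → ℕ → ℝ)
    (hμ01 : ∀ q ∈ Q, ∀ a : ℕ, 0 ≤ μ q a ∧ μ q a ≤ 1)
    (hμsum : ∀ q ∈ Q, ∑ a ∈ Finset.range q, μ q a = 1)
    (L : ℝ) (hL : 0 ≤ L)
    (hlower : ∀ p₀ ∈ R, L ≤ ∑ q ∈ Q, μ q (p₀ % q)) :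
    ∃ a : ℕ → ℕ,
      ((R.filter (fun p₀ : ℕ => ∀ q ∈ Q, p₀ % q ≠ a q % q)).card : ℝ)
        ≤ Real.exp (-L) * (R.card : ℝ) :=
  stmt15_general Q R μ hμ01 hμsum L hlower
end

section
/- There is an absolute constant κ > 0 such that for every ε ∈ (0,1) and every η > 0 there exists x₀ with the following property: for all x ≥ x₀ and all integers M ≤ κ·x^{1/5} with ω(M) ≤ exp(log₂M·log₄M/log₃M), setting w = log₄x and y = exp((1−ε)·log x·log₃x/log₂x), one has ∑_{w < p ≤ y, p ∣ M} (log p)²/p ≤ η·(log y)/(log x)^{1/2}, where the sum is over primes p dividing M with w < p ≤ y. -/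
/-!
Each term `(log p)² / p` is at most `4`, so the sum is at most `4 ω(M)`. Since `log₄M ≤ log₃M / 4`
once `M` is large, the hypothesis on `ω(M)` gives `ω(M) ≤ exp(log₂M / 4) = (log M)^{1/4}` up to an
additive constant covering small `M`, and `M ≤ x` bounds this by `(log x)^{1/4}`.
The right-hand side is `η (1 - ε) (log x)^{1/2} log₃x / log₂x`, which beats any multiple of
`(log x)^{1/4}` because `log₂x = o((log x)^{1/4})`.
-/

open scoped Classical

/-- `y = exp((1−ε)·log x·log₃x/log₂x)`. -/
noncomputable def yy (ε x : ℝ) : ℝ :=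
  Real.exp ((1 - ε) * Real.log x * Real.log^[3] x / Real.log^[2] x)

open Real Filter Finset

lemma Real.le_log_of_exp_le {a b : ℝ} (h : exp a ≤ b) : a ≤ log b :=
  (le_log_iff_exp_le ((exp_pos a).trans_le h)).2 h

lemma log_le_two_mul_sqrt {t : ℝ} (ht : 0 ≤ t) : log t ≤ 2 * √t := by
  have h := log_le_rpow_div ht (by norm_num : (0 : ℝ) < 1 / 2)
  rw [← sqrt_eq_rpow] at h
  linarith

lemma log_sq_le_four_mul {t : ℝ} (ht : 1 ≤ t) : log t ^ 2 ≤ 4 * t := by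
  have h := log_le_two_mul_sqrt (zero_le_one.trans ht)
  nlinarith [log_nonneg ht, sq_sqrt (zero_le_one.trans ht)]

lemma log_le_div_four {t : ℝ} (ht : 64 ≤ t) : log t ≤ t / 4 := by
  have h8 : 8 ≤ √t := by
    rw [show (8 : ℝ) = √64 by rw [show (64 : ℝ) = 8 ^ 2 by norm_num, sqrt_sq (by norm_num)]]
    exact sqrt_le_sqrt ht
  nlinarith [log_le_two_mul_sqrt (by linarith : (0 : ℝ) ≤ t), sq_sqrt (by linarith : (0 : ℝ) ≤ t)]

lemma sum_filter_primeFactors_log_sq_div_le (M : ℕ) (P : ℕ → Prop) [DecidablePred P] :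
    ∑ p ∈ M.primeFactors.filter P, log p ^ 2 / p ≤ 4 * #M.primeFactors := by
  calc ∑ p ∈ M.primeFactors.filter P, log p ^ 2 / (p : ℝ)
      ≤ ∑ _p ∈ M.primeFactors.filter P, (4 : ℝ) := by
        refine sum_le_sum fun p hp => ?_
        have hp1 : (1 : ℝ) ≤ p := by
          exact_mod_cast (Nat.prime_of_mem_primeFactors (mem_filter.1 hp).1).one_lt.le
        rw [div_le_iff₀ (by linarith)]
        exact log_sq_le_four_mul hp1
    _ ≤ 4 * #M.primeFactors := by
        rw [sum_const, nsmul_eq_mul, mul_comm]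
        gcongr
        exact filter_subset P _

lemma card_primeFactors_le (n : ℕ) : #n.primeFactors ≤ n := by
  have h : n.primeFactors ⊆ Icc 1 n := fun p hp =>
    mem_Icc.2 ⟨(Nat.prime_of_mem_primeFactors hp).one_lt.le, Nat.le_of_mem_primeFactors hp⟩
  simpa using card_le_card h

lemma exp_iterate_log_le_log_rpow {t : ℝ} (ht : exp (exp (exp 64)) ≤ t) :
    exp (log^[2] t * log^[4] t / log^[3] t) ≤ log t ^ (1 / 4 : ℝ) := by
  have h1 := le_log_of_exp_le ht
  have h2 := le_log_of_exp_le h1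
  have h3 := le_log_of_exp_le h2
  simp only [Function.iterate_succ, Function.iterate_zero, Function.comp_apply, id]
  set u := log t
  set a := log u
  set b := log a
  have ha : 0 ≤ a := (exp_pos 64).le.trans h2
  have hb : 0 < b := by linarith
  have hratio : a * log b / b ≤ a / 4 := by
    rw [div_le_div_iff₀ hb (by norm_num)]
    nlinarith [log_le_div_four h3]
  calc exp (a * log b / b) ≤ exp (a / 4) := exp_le_exp.2 hratio
    _ = u ^ (1 / 4 : ℝ) := by
        rw [rpow_def_of_pos ((exp_pos _).trans_le h1), div_eq_mul_one_div]

lemma card_primeFactors_le_const_add_log_rpow {M : ℕ}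
    (hω : (#M.primeFactors : ℝ) ≤ exp (log^[2] (M : ℝ) * log^[4] (M : ℝ) / log^[3] (M : ℝ))) :
    (#M.primeFactors : ℝ) ≤ exp (exp (exp 64)) + log M ^ (1 / 4 : ℝ) := by
  rcases lt_or_ge (M : ℝ) (exp (exp (exp 64))) with hM | hM
  · have h : (#M.primeFactors : ℝ) ≤ M := by exact_mod_cast card_primeFactors_le M
    have : 0 ≤ log M ^ (1 / 4 : ℝ) := rpow_nonneg (log_natCast_nonneg M) _
    linarith
  · have h := hω.trans (exp_iterate_log_le_log_rpow hM)
    have : 0 ≤ exp (exp (exp 64)) := (exp_pos _).le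
    linarith

lemma eventually_add_mul_rpow_le (A B : ℝ) {c : ℝ} (hc : 0 < c) :
    ∀ᶠ L in atTop, A + B * L ^ (1 / 4 : ℝ) ≤ c * (L * log (log L) / log L) / L ^ (1 / 2 : ℝ) := by
  set K := |A| + |B| + 1
  have hK : 0 < K := by positivity
  have hlog : ∀ᶠ L in atTop, log L ≤ c / K * L ^ (1 / 4 : ℝ) := by
    filter_upwards [((isLittleO_log_rpow_atTop (by norm_num : (0 : ℝ) < 1 / 4)).bound
      (by positivity : 0 < c / K)), eventually_ge_atTop 1] with L hL hL1
    rwa [norm_of_nonneg (log_nonneg hL1), norm_of_nonneg (rpow_nonneg (by linarith) _)] at hL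
  filter_upwards [hlog, eventually_ge_atTop (exp (exp 1))] with L hℓ hL
  have hL0 : 0 < L := (exp_pos _).trans_le hL
  have hℓ1 := le_log_of_exp_le hL
  have hℓ0 : 0 < log L := (exp_pos 1).trans_le hℓ1
  have hlogℓ := le_log_of_exp_le hℓ1
  set r := L ^ (1 / 4 : ℝ)
  have hr : 1 ≤ r := one_le_rpow ((one_le_exp (exp_pos 1).le).trans hL) (by norm_num)
  have hr4 : L = r ^ 4 := by
    rw [← rpow_natCast, ← rpow_mul hL0.le]
    norm_num
  have hr2 : L ^ (1 / 2 : ℝ) = r ^ 2 := by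
    rw [← rpow_natCast, ← rpow_mul hL0.le]
    norm_num
  calc A + B * r ≤ K * r := by
        nlinarith [le_abs_self A, le_abs_self B, abs_nonneg A, abs_nonneg B]
    _ = c * r ^ 2 / (c / K * r) := by field_simp
    _ ≤ c * r ^ 2 / log L := div_le_div_of_nonneg_left (by positivity) hℓ0 hℓ
    _ ≤ c * r ^ 2 * log (log L) / log L :=
        div_le_div_of_nonneg_right (le_mul_of_one_le_right (by positivity) hlogℓ) hℓ0.le
    _ = c * (r ^ 4 * log (log L) / log L) / r ^ 2 := by field_simp
    _ = c * (L * log (log L) / log L) / L ^ (1 / 2 : ℝ) := by rw [← hr4, hr2]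

/-- With `w = log₄x`: for `M ≤ κ·x^{1/5}` with
`ω(M) ≤ exp(log₂M·log₄M/log₃M)`, one has
`∑_{w < p ≤ y, p ∣ M} (log p)²/p ≤ η·(log y)/(log x)^{1/2}` for large `x`. -/
theorem stmt17 :
    ∃ κ : ℝ, 0 < κ ∧ ∀ ε : ℝ, 0 < ε → ε < 1 → ∀ η : ℝ, 0 < η →
    ∃ x₀ : ℝ, ∀ x : ℝ, x ≥ x₀ →
    ∀ M : ℕ, 1 ≤ M → (M : ℝ) ≤ κ * x ^ ((1 : ℝ) / 5) →
    (M.primeFactors.card : ℝ) ≤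
      Real.exp (Real.log^[2] (M : ℝ) * Real.log^[4] (M : ℝ) / Real.log^[3] (M : ℝ)) →
    (∑ p ∈ M.primeFactors.filter (fun p : ℕ =>
        Real.log^[4] x < (p : ℝ) ∧ (p : ℝ) ≤ yy ε x),
      (Real.log (p : ℝ)) ^ 2 / (p : ℝ))
      ≤ η * Real.log (yy ε x) / (Real.log x) ^ ((1 : ℝ) / 2) := by
  refine ⟨1, one_pos, fun ε _ hε1 η hη => ?_⟩
  obtain ⟨x₀, hx₀⟩ := eventually_atTop.1 <|
    (tendsto_log_atTop.eventually (eventually_add_mul_rpow_le (4 * exp (exp (exp 64))) 4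
      (mul_pos hη (sub_pos.2 hε1)))).and (eventually_ge_atTop 1)
  refine ⟨x₀, fun x hx M hM hMx hω => ?_⟩
  obtain ⟨hbound, hx1⟩ := hx₀ x hx
  have hlogM : log M ≤ log x := log_le_log (by exact_mod_cast hM)
    (hMx.trans (by rw [one_mul]; exact rpow_le_self_of_one_le hx1 (by norm_num)))
  calc _ ≤ 4 * (#M.primeFactors : ℝ) := sum_filter_primeFactors_log_sq_div_le M _
    _ ≤ 4 * (exp (exp (exp 64)) + log M ^ (1 / 4 : ℝ)) := by
        gcongr
        exact card_primeFactors_le_const_add_log_rpow hω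
    _ ≤ 4 * exp (exp (exp 64)) + 4 * log x ^ (1 / 4 : ℝ) := by
        rw [mul_add]
        gcongr
    _ ≤ _ := hbound.trans_eq (by rw [yy, log_exp]; simp only [Function.iterate_succ,
        Function.iterate_zero, Function.comp_apply, id]; ring)
end
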